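/- Let θ ∈ Θ and let X¹, X², … be independent random binary vectors, each with distribution π_θ. Then almost surely there exists N such that for all n ≥ N, the empirical log pseudo-likelihood T ↦ (1/n) Σ_{j=1}^n LPL(X^j, T) is strictly concave on Θ. -/

import Mathlib

open scoped BigOperators RealInnerProductSpace Classical
open Finset

/-- Binary vectors of length `L`. -/
abbrev BinVec (L : ℕ) := Fin L → Bool

/-- Real value (0 or 1) of the `s`-th coordinate of a binary vector. -/
def bval {L : ℕ} (x : BinVec L) (s : Fin L) : ℝ := if x s then 1 else 0

/-- Index set for the parameter space: pairs `s ≤ t`; the diagonal `(s,s)` codes `θ_s`,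
off-diagonal `(s,t)` with `s < t` codes `θ_{s,t}`.  Cardinality `L(L+1)/2`. -/
abbrev Idx (L : ℕ) := {p : Fin L × Fin L // p.1 ≤ p.2}

/-- The parameter space `Θ`, with its Euclidean norm and inner product. -/
abbrev Theta (L : ℕ) := EuclideanSpace ℝ (Idx L)

/-- Symmetrized coordinate access: `coordOf θ s s = θ_s`, and `coordOf θ s t = θ_{s,t} = θ_{t,s}`. -/
def coordOf {L : ℕ} (θ : Theta L) (s t : Fin L) : ℝ :=
  if h : s ≤ t then θ ⟨(s, t), h⟩ else θ ⟨(t, s), le_of_not_ge h⟩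

/-- The statistics vector `U(x) ∈ Θ`, with `U_s(x) = x_s` and `U_{s,t}(x) = x_s x_t`. -/
noncomputable def U {L : ℕ} (x : BinVec L) : Theta L :=
  (EuclideanSpace.equiv (Idx L) ℝ).symm fun i => bval x i.1.1 * bval x i.1.2

/-- Partition function `Z(θ)`. -/
noncomputable def Zfun {L : ℕ} (θ : Theta L) : ℝ :=
  ∑ y : BinVec L, Real.exp (-⟪θ, U y⟫)

/-- The autologistic distribution `π_θ`. -/
noncomputable def piA {L : ℕ} (θ : Theta L) (x : BinVec L) : ℝ :=
  Real.exp (-⟪θ, U x⟫) / Zfun θ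

/-- `a_{s,x}(T) = −(T_s + Σ_{r≠s} T_{s,r} x_r)`. -/
noncomputable def aFun {L : ℕ} (s : Fin L) (x : BinVec L) (T : Theta L) : ℝ :=
  -(coordOf T s s + ∑ r ∈ Finset.univ.erase s, coordOf T s r * bval x r)

/-- The vector `A(s,x) ∈ Θ` with `A_s(s,x) = −1`, `A_{s,r}(s,x) = −x_r` for `r ≠ s`,
all other coordinates `0`. -/
noncomputable def Avec {L : ℕ} (s : Fin L) (x : BinVec L) : Theta L :=
  (EuclideanSpace.equiv (Idx L) ℝ).symm fun i =>
    if i.1.1 = s ∧ i.1.2 = s then -1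
    else if i.1.1 = s then -(bval x i.1.2)
    else if i.1.2 = s then -(bval x i.1.1)
    else 0

/-- `g(z) = 1/(1+e^z)`. -/
noncomputable def gfun (z : ℝ) : ℝ := 1 / (1 + Real.exp z)

/-- `h(z) = e^z/(1+e^z)`. -/
noncomputable def hfun (z : ℝ) : ℝ := Real.exp z / (1 + Real.exp z)

/-- Local log pseudo-likelihood `LPL_{s,x}(T)`. -/
noncomputable def LPLs {L : ℕ} (s : Fin L) (x : BinVec L) (T : Theta L) : ℝ :=
  bval x s * aFun s x T + Real.log (gfun (aFun s x T))

/-- Log pseudo-likelihood `LPL(x,T) = Σ_s LPL_{s,x}(T)`. -/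
noncomputable def LPL {L : ℕ} (x : BinVec L) (T : Theta L) : ℝ := ∑ s, LPLs s x T

/-- Mean log pseudo-likelihood `g_θ(T)`. -/
noncomputable def gbar {L : ℕ} (θ T : Theta L) : ℝ := ∑ x : BinVec L, piA θ x * LPL x T


/-!
Write `ψ = log ∘ g`. Then `LPL_{s,x}(T) = x_s a_{s,x}(T) + ψ(a_{s,x}(T))` is an affine function of `T`
plus `ψ` of the linear form `a_{s,x}`, and `ψ(z) = -log(1 + e^z)` is strictly concave (its derivative
is minus the logistic sigmoid). So every empirical log pseudo-likelihood is concave, and it is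
strictly concave as soon as the linear forms `a_{s,x}`, over the sampled `x`, have no common zero
besides `0`. Over all of `B` they do not: `x = 0` recovers `T_s` and `x = e_r` recovers `T_{s,r}`.
Finally every `x ∈ B` has `π_θ(x) > 0`, so by the second Borel–Cantelli lemma it almost surely occurs
in the sample, and from some index on the sample has exhausted the finite set `B`.
-/

open MeasureTheory ProbabilityTheory Filter Set

section StrictConcavity

variable {E : Type*} [AddCommGroup E] [Module ℝ E]

lemma StrictConcaveOn.const_mul {s : Set E} {f : E → ℝ} {c : ℝ} (hc : 0 < c)
    (hf : StrictConcaveOn ℝ s f) : StrictConcaveOn ℝ s fun x => c * f x := by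
  refine ⟨hf.1, fun x hx y hy hxy a b ha hb hab => ?_⟩
  have := hf.2 hx hy hxy ha hb hab
  simp only [smul_eq_mul] at this ⊢
  nlinarith

theorem strictConcaveOn_univ_sum_comp_linearMap {ι : Type*} {s : Finset ι} {φ : ι → ℝ → ℝ}
    (hφ : ∀ i ∈ s, StrictConcaveOn ℝ univ (φ i)) (ℓ : ι → E →ₗ[ℝ] ℝ)
    (hsep : ∀ x : E, (∀ i ∈ s, ℓ i x = 0) → x = 0) :
    StrictConcaveOn ℝ univ fun x => ∑ i ∈ s, φ i (ℓ i x) := by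
  refine ⟨convex_univ, fun x _ y _ hxy a b ha hb hab => ?_⟩
  obtain ⟨i₀, hi₀, hne⟩ : ∃ i ∈ s, ℓ i x ≠ ℓ i y := by
    by_contra! h
    exact hxy (sub_eq_zero.1 (hsep _ fun i hi => by rw [map_sub, h i hi, sub_self]))
  simp only [smul_eq_mul, Finset.mul_sum, ← Finset.sum_add_distrib, map_add, map_smul]
  refine Finset.sum_lt_sum (fun i hi => ?_) ⟨i₀, hi₀, ?_⟩
  · simpa using (hφ i hi).concaveOn.2 (mem_univ (ℓ i x)) (mem_univ (ℓ i y)) ha.le hb.le hab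
  · simpa using (hφ i₀ hi₀).2 (mem_univ (ℓ i₀ x)) (mem_univ (ℓ i₀ y)) hne ha hb hab

end StrictConcavity

lemma hasDerivAt_log_gfun (z : ℝ) : HasDerivAt (fun z => Real.log (gfun z)) (-Real.sigmoid z) z := by
  have hpos : 0 < 1 + Real.exp z := by positivity
  have hsig : Real.sigmoid z = Real.exp z / (1 + Real.exp z) := by
    rw [Real.sigmoid_def, Real.exp_neg]
    field_simp
    ring
  have h := (((Real.hasDerivAt_exp z).const_add 1).log hpos.ne').neg
  simp only [gfun, one_div, Real.log_inv]
  rwa [hsig]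

lemma strictConcaveOn_log_gfun : StrictConcaveOn ℝ univ fun z => Real.log (gfun z) := by
  refine StrictAnti.strictConcaveOn_univ_of_deriv
    (continuous_iff_continuousAt.2 fun z => (hasDerivAt_log_gfun z).continuousAt) ?_
  rw [funext fun z => (hasDerivAt_log_gfun z).deriv]
  exact fun z w hzw => neg_lt_neg (Real.sigmoid_strictMono hzw)

lemma strictConcaveOn_mul_add_log_gfun (c : ℝ) :
    StrictConcaveOn ℝ univ fun z => c * z + Real.log (gfun z) :=
  ((LinearMap.mul ℝ ℝ c).concaveOn convex_univ).add_strictConcaveOn strictConcaveOn_log_gfun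

section Coordinates

variable {L : ℕ}

lemma coordOf_add (T T' : Theta L) (s t : Fin L) :
    coordOf (T + T') s t = coordOf T s t + coordOf T' s t := by
  unfold coordOf
  split_ifs <;> rfl

lemma coordOf_smul (c : ℝ) (T : Theta L) (s t : Fin L) :
    coordOf (c • T) s t = c * coordOf T s t := by
  unfold coordOf
  split_ifs <;> rfl

noncomputable def aFunLinear (s : Fin L) (x : BinVec L) : Theta L →ₗ[ℝ] ℝ where
  toFun := aFun s x
  map_add' T T' := by
    simp only [aFun, coordOf_add, add_mul, Finset.sum_add_distrib]
    ring
  map_smul' c T := by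
    simp only [aFun, coordOf_smul, mul_assoc, ← Finset.mul_sum, smul_eq_mul, RingHom.id_apply]
    ring

lemma aFun_const_false (s : Fin L) (T : Theta L) : aFun s (fun _ => false) T = -coordOf T s s := by
  simp [aFun, bval]

lemma aFun_single {s r : Fin L} (hrs : r ≠ s) (T : Theta L) :
    aFun s (fun t => decide (t = r)) T = -(coordOf T s s + coordOf T s r) := by
  rw [aFun, Finset.sum_eq_single_of_mem r (Finset.mem_erase.2 ⟨hrs, Finset.mem_univ r⟩)]
  · simp [bval]
  · intro t _ htr
    simp [bval, htr]

theorem eq_zero_of_forall_aFun_eq_zero {T : Theta L} (h : ∀ s x, aFun s x T = 0) : T = 0 := by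
  have hdiag (s : Fin L) : coordOf T s s = 0 := by
    simpa [aFun_const_false] using h s fun _ => false
  have hoff (s r : Fin L) : coordOf T s r = 0 := by
    rcases eq_or_ne r s with rfl | hrs
    · exact hdiag r
    · simpa [aFun_single hrs, hdiag s] using h s fun t => decide (t = r)
  ext ⟨⟨p, q⟩, hpq⟩
  simpa [coordOf, hpq] using hoff p q

end Coordinates

theorem strictConcaveOn_empirical_LPL {L n : ℕ} (x : ℕ → BinVec L)
    (hx : ∀ v : BinVec L, ∃ j < n, x j = v) :
    StrictConcaveOn ℝ univ fun T : Theta L => (1 / n : ℝ) * ∑ j ∈ Finset.range n, LPL (x j) T := by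
  obtain ⟨j, hj, -⟩ := hx fun _ => false
  refine StrictConcaveOn.const_mul (one_div_pos.2 (Nat.cast_pos.2 (j.zero_le.trans_lt hj))) ?_
  have hsum : (fun T : Theta L => ∑ j ∈ Finset.range n, LPL (x j) T) = fun T =>
      ∑ p ∈ Finset.range n ×ˢ Finset.univ,
        (fun z => bval (x p.1) p.2 * z + Real.log (gfun z)) (aFunLinear p.2 (x p.1) T) := by
    funext T
    simp only [LPL, LPLs, Finset.sum_product]
    rfl
  rw [hsum]
  refine strictConcaveOn_univ_sum_comp_linearMap (fun p _ => strictConcaveOn_mul_add_log_gfun _)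
    _ fun T hT => eq_zero_of_forall_aFun_eq_zero fun s v => ?_
  obtain ⟨j, hj, rfl⟩ := hx v
  exact hT (j, s) (Finset.mem_product.2 ⟨Finset.mem_range.2 hj, Finset.mem_univ s⟩)

theorem piA_pos {L : ℕ} (θ : Theta L) (x : BinVec L) : 0 < piA θ x :=
  div_pos (Real.exp_pos _)
    (Finset.sum_pos (fun _ _ => Real.exp_pos _) Finset.univ_nonempty)

theorem ae_frequently_eq_of_iIndepFun {Ω α : Type*} [MeasurableSpace Ω] {μ : Measure Ω}
    [IsProbabilityMeasure μ] [MeasurableSpace α] [MeasurableSingletonClass α]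
    {X : ℕ → Ω → α} (hmeas : ∀ j, Measurable (X j)) (hindep : iIndepFun X μ) {x : α}
    (hx : ∑' j, μ {ω | X j ω = x} = ⊤) :
    ∀ᵐ ω ∂μ, ∃ᶠ j in atTop, X j ω = x := by
  have hmeas_set (j : ℕ) : MeasurableSet {ω | X j ω = x} := hmeas j (measurableSet_singleton x)
  have hset : iIndepSet (fun j => {ω | X j ω = x}) μ :=
    (iIndepSet_iff_meas_biInter hmeas_set).2 fun S =>
      hindep.measure_inter_preimage_eq_mul S (sets := fun _ => {x})
        fun _ _ => measurableSet_singleton x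
  have hlimsup := measure_limsup_eq_one hmeas_set hset hx
  rw [← measure_univ (μ := μ), ← ae_mem_iff_measure_eq
    (MeasurableSet.measurableSet_limsup hmeas_set).nullMeasurableSet] at hlimsup
  filter_upwards [hlimsup] with ω hω
  exact (mem_limsup_iff_frequently_mem (s := fun j => {ω | X j ω = x})).1 hω

theorem stmt7_general (L : ℕ) (θ : Theta L)
    {Ω : Type*} [MeasurableSpace Ω] (μ : MeasureTheory.Measure Ω)
    [MeasureTheory.IsProbabilityMeasure μ]
    (X : ℕ → Ω → BinVec L) (hmeas : ∀ j, Measurable (X j))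
    (hindep : ProbabilityTheory.iIndepFun X μ)
    (hlaw : ∀ (j : ℕ) (x : BinVec L), μ {ω | X j ω = x} = ENNReal.ofReal (piA θ x)) :
    ∀ᵐ ω ∂μ, ∃ N : ℕ, ∀ n : ℕ, N ≤ n →
      StrictConcaveOn ℝ Set.univ
        (fun T : Theta L => (1 / n : ℝ) * ∑ j ∈ Finset.range n, LPL (X j ω) T) := by
  have hsampled : ∀ᵐ ω ∂μ, ∀ v : BinVec L, ∃ᶠ j in atTop, X j ω = v := by
    refine ae_all_iff.2 fun v => ae_frequently_eq_of_iIndepFun hmeas hindep ?_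
    simp only [hlaw]
    exact ENNReal.tsum_const_eq_top_of_ne_zero (ENNReal.ofReal_pos.2 (piA_pos θ v)).ne'
  filter_upwards [hsampled] with ω hω
  choose f hf using fun v => (hω v).exists
  refine ⟨Finset.univ.sup f + 1, fun n hn => strictConcaveOn_empirical_LPL _ fun v => ?_⟩
  exact ⟨f v, (Nat.lt_succ_of_le (Finset.le_sup (Finset.mem_univ v))).trans_le hn, hf v⟩

/-- for i.i.d. samples `X¹, X², …` from `π_θ`, almost surely the empirical
log pseudo-likelihood is eventually strictly concave on `Θ`. -/
theorem stmt7 (L : ℕ) (hL : 1 ≤ L) (θ : Theta L)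
    {Ω : Type*} [MeasurableSpace Ω] (μ : MeasureTheory.Measure Ω)
    [MeasureTheory.IsProbabilityMeasure μ]
    (X : ℕ → Ω → BinVec L) (hmeas : ∀ j, Measurable (X j))
    (hindep : ProbabilityTheory.iIndepFun X μ)
    (hlaw : ∀ (j : ℕ) (x : BinVec L), μ {ω | X j ω = x} = ENNReal.ofReal (piA θ x)) :
    ∀ᵐ ω ∂μ, ∃ N : ℕ, ∀ n : ℕ, N ≤ n →
      StrictConcaveOn ℝ Set.univ
        (fun T : Theta L => (1 / n : ℝ) * ∑ j ∈ Finset.range n, LPL (X j ω) T) :=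
  stmt7_general L θ μ X hmeas hindep hlaw
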